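/- In the polynomial ring P = ℚ[x₀, x₃, x₁, x₄] graded with deg x₀ = 6, deg x₃ = 9, deg x₁ = 13, deg x₄ = 16, the kernel of the ring homomorphism P → ℚ[t] sending x₀ ↦ t⁶, x₃ ↦ t⁹, x₁ ↦ t¹³, x₄ ↦ t¹⁶ contains the six elements x₀³ − x₃², x₃x₁ − x₀x₄, x₀²x₁ − x₃x₄, x₀x₁² − x₄², x₀²x₃³ − x₁³, x₀x₃⁴ − x₁²x₄, and these six elements generate the kernel. -/

import Mathlib

open MvPolynomial

/-- The six binomial generators. -/
noncomputable def gset : Set (MvPolynomial (Fin 4) ℚ) :=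
  {X 0 ^ 3 - X 1 ^ 2, X 1 * X 2 - X 0 * X 3, X 0 ^ 2 * X 2 - X 1 * X 3,
    X 0 * X 2 ^ 2 - X 3 ^ 2, X 0 ^ 2 * X 1 ^ 3 - X 2 ^ 3,
    X 0 * X 1 ^ 4 - X 2 ^ 2 * X 3}

/-- Normal form monomial of weighted degree `d` (Apéry set of ⟨6,9,13,16⟩ wrt 6). -/
noncomputable def Nf (d : ℕ) : MvPolynomial (Fin 4) ℚ :=
  if d % 6 = 0 then X 0 ^ (d / 6)
  else if d % 6 = 1 then X 0 ^ ((d - 13) / 6) * X 2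
  else if d % 6 = 2 then X 0 ^ ((d - 26) / 6) * X 2 ^ 2
  else if d % 6 = 3 then X 0 ^ ((d - 9) / 6) * X 1
  else if d % 6 = 4 then X 0 ^ ((d - 16) / 6) * X 3
  else X 0 ^ ((d - 29) / 6) * X 2 * X 3

lemma Nf0 (a : ℕ) : Nf (6 * a) = X 0 ^ a := by
  unfold Nf
  rw [if_pos (by omega), show 6 * a / 6 = a by omega]

lemma Nf3 (a : ℕ) : Nf (6 * a + 9) = X 0 ^ a * X 1 := by
  unfold Nf
  rw [if_neg (by omega), if_neg (by omega), if_neg (by omega), if_pos (by omega),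
    show (6 * a + 9 - 9) / 6 = a by omega]

lemma Nf1 (a : ℕ) : Nf (6 * a + 13) = X 0 ^ a * X 2 := by
  unfold Nf
  rw [if_neg (by omega), if_pos (by omega), show (6 * a + 13 - 13) / 6 = a by omega]

lemma Nf2 (a : ℕ) : Nf (6 * a + 26) = X 0 ^ a * X 2 ^ 2 := by
  unfold Nf
  rw [if_neg (by omega), if_neg (by omega), if_pos (by omega),
    show (6 * a + 26 - 26) / 6 = a by omega]

lemma Nf4 (a : ℕ) : Nf (6 * a + 16) = X 0 ^ a * X 3 := by
  unfold Nf
  rw [if_neg (by omega), if_neg (by omega), if_neg (by omega), if_neg (by omega),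
    if_pos (by omega), show (6 * a + 16 - 16) / 6 = a by omega]

lemma Nf5 (a : ℕ) : Nf (6 * a + 29) = X 0 ^ a * X 2 * X 3 := by
  unfold Nf
  rw [if_neg (by omega), if_neg (by omega), if_neg (by omega), if_neg (by omega),
    if_neg (by omega), show (6 * a + 29 - 29) / 6 = a by omega]

lemma mem_gset_1 : (X 0 ^ 3 - X 1 ^ 2 : MvPolynomial (Fin 4) ℚ) ∈ gset := Set.mem_insert _ _
lemma mem_gset_2 : (X 1 * X 2 - X 0 * X 3 : MvPolynomial (Fin 4) ℚ) ∈ gset :=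
  Set.mem_insert_of_mem _ (Set.mem_insert _ _)
lemma mem_gset_3 : (X 0 ^ 2 * X 2 - X 1 * X 3 : MvPolynomial (Fin 4) ℚ) ∈ gset :=
  Set.mem_insert_of_mem _ (Set.mem_insert_of_mem _ (Set.mem_insert _ _))
lemma mem_gset_4 : (X 0 * X 2 ^ 2 - X 3 ^ 2 : MvPolynomial (Fin 4) ℚ) ∈ gset :=
  Set.mem_insert_of_mem _ (Set.mem_insert_of_mem _ (Set.mem_insert_of_mem _ (Set.mem_insert _ _)))
lemma mem_gset_5 : (X 0 ^ 2 * X 1 ^ 3 - X 2 ^ 3 : MvPolynomial (Fin 4) ℚ) ∈ gset :=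
  Set.mem_insert_of_mem _ (Set.mem_insert_of_mem _ (Set.mem_insert_of_mem _
    (Set.mem_insert_of_mem _ (Set.mem_insert _ _))))
lemma mem_gset_6 : (X 0 * X 1 ^ 4 - X 2 ^ 2 * X 3 : MvPolynomial (Fin 4) ℚ) ∈ gset :=
  Set.mem_insert_of_mem _ (Set.mem_insert_of_mem _ (Set.mem_insert_of_mem _
    (Set.mem_insert_of_mem _ (Set.mem_insert_of_mem _ rfl))))

/-- key reduction: every monomial is congruent mod `span gset` to the normal form
of its weighted degree. -/
lemma reduce (n : ℕ) : ∀ a b c e : ℕ, 3 * b + 4 * c + 5 * e ≤ n →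
    X 0 ^ a * X 1 ^ b * X 2 ^ c * X 3 ^ e - Nf (6 * a + 9 * b + 13 * c + 16 * e)
      ∈ Ideal.span gset := by
  induction n with
  | zero =>
    intro a b c e h
    obtain ⟨rfl, rfl, rfl⟩ : b = 0 ∧ c = 0 ∧ e = 0 := by omega
    rw [show 6 * a + 9 * 0 + 13 * 0 + 16 * 0 = 6 * a by ring, Nf0,
      show (X 0 ^ a * X 1 ^ 0 * X 2 ^ 0 * X 3 ^ 0 : MvPolynomial (Fin 4) ℚ)
        = X 0 ^ a by ring, sub_self]
    exact zero_mem _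
  | succ n IH =>
    intro a b c e h
    by_cases h1 : 2 ≤ b
    · -- x₃² → x₀³
      obtain ⟨b', rfl⟩ : ∃ b', b = b' + 2 := ⟨b - 2, by omega⟩
      have step : (X 0 ^ a * X 1 ^ (b' + 2) * X 2 ^ c * X 3 ^ e
          - X 0 ^ (a + 3) * X 1 ^ b' * X 2 ^ c * X 3 ^ e : MvPolynomial (Fin 4) ℚ)
          = (X 0 ^ a * X 1 ^ b' * X 2 ^ c * X 3 ^ e) * -(X 0 ^ 3 - X 1 ^ 2) := by ring
      have hs : _ ∈ Ideal.span gset :=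
        Ideal.mul_mem_left _ (X 0 ^ a * X 1 ^ b' * X 2 ^ c * X 3 ^ e)
          (neg_mem (Ideal.subset_span mem_gset_1))
      rw [← step] at hs
      have this' := add_mem hs (IH (a + 3) b' c e (by omega))
      rw [sub_add_sub_cancel] at this'
      rwa [show 6 * a + 9 * (b' + 2) + 13 * c + 16 * e
        = 6 * (a + 3) + 9 * b' + 13 * c + 16 * e by ring]
    by_cases h2 : 1 ≤ b ∧ 1 ≤ c
    · -- x₃x₁ → x₀x₄
      obtain ⟨b', rfl⟩ : ∃ b', b = b' + 1 := ⟨b - 1, by omega⟩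
      obtain ⟨c', rfl⟩ : ∃ c', c = c' + 1 := ⟨c - 1, by omega⟩
      have step : (X 0 ^ a * X 1 ^ (b' + 1) * X 2 ^ (c' + 1) * X 3 ^ e
          - X 0 ^ (a + 1) * X 1 ^ b' * X 2 ^ c' * X 3 ^ (e + 1) : MvPolynomial (Fin 4) ℚ)
          = (X 0 ^ a * X 1 ^ b' * X 2 ^ c' * X 3 ^ e) * (X 1 * X 2 - X 0 * X 3) := by ring
      have hs : _ ∈ Ideal.span gset :=
        Ideal.mul_mem_left _ (X 0 ^ a * X 1 ^ b' * X 2 ^ c' * X 3 ^ e)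
          (Ideal.subset_span mem_gset_2)
      rw [← step] at hs
      have this' := add_mem hs (IH (a + 1) b' c' (e + 1) (by omega))
      rw [sub_add_sub_cancel] at this'
      rwa [show 6 * a + 9 * (b' + 1) + 13 * (c' + 1) + 16 * e
        = 6 * (a + 1) + 9 * b' + 13 * c' + 16 * (e + 1) by ring]
    by_cases h3 : 1 ≤ b ∧ 1 ≤ e
    · -- x₃x₄ → x₀²x₁
      obtain ⟨b', rfl⟩ : ∃ b', b = b' + 1 := ⟨b - 1, by omega⟩
      obtain ⟨e', rfl⟩ : ∃ e', e = e' + 1 := ⟨e - 1, by omega⟩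
      have step : (X 0 ^ a * X 1 ^ (b' + 1) * X 2 ^ c * X 3 ^ (e' + 1)
          - X 0 ^ (a + 2) * X 1 ^ b' * X 2 ^ (c + 1) * X 3 ^ e' : MvPolynomial (Fin 4) ℚ)
          = (X 0 ^ a * X 1 ^ b' * X 2 ^ c * X 3 ^ e') * -(X 0 ^ 2 * X 2 - X 1 * X 3) := by ring
      have hs : _ ∈ Ideal.span gset :=
        Ideal.mul_mem_left _ (X 0 ^ a * X 1 ^ b' * X 2 ^ c * X 3 ^ e')
          (neg_mem (Ideal.subset_span mem_gset_3))
      rw [← step] at hs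
      have this' := add_mem hs (IH (a + 2) b' (c + 1) e' (by omega))
      rw [sub_add_sub_cancel] at this'
      rwa [show 6 * a + 9 * (b' + 1) + 13 * c + 16 * (e' + 1)
        = 6 * (a + 2) + 9 * b' + 13 * (c + 1) + 16 * e' by ring]
    by_cases h4 : 3 ≤ c
    · -- x₁³ → x₀²x₃³
      obtain ⟨c', rfl⟩ : ∃ c', c = c' + 3 := ⟨c - 3, by omega⟩
      have step : (X 0 ^ a * X 1 ^ b * X 2 ^ (c' + 3) * X 3 ^ e
          - X 0 ^ (a + 2) * X 1 ^ (b + 3) * X 2 ^ c' * X 3 ^ e : MvPolynomial (Fin 4) ℚ)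
          = (X 0 ^ a * X 1 ^ b * X 2 ^ c' * X 3 ^ e) * -(X 0 ^ 2 * X 1 ^ 3 - X 2 ^ 3) := by ring
      have hs : _ ∈ Ideal.span gset :=
        Ideal.mul_mem_left _ (X 0 ^ a * X 1 ^ b * X 2 ^ c' * X 3 ^ e)
          (neg_mem (Ideal.subset_span mem_gset_5))
      rw [← step] at hs
      have this' := add_mem hs (IH (a + 2) (b + 3) c' e (by omega))
      rw [sub_add_sub_cancel] at this'
      rwa [show 6 * a + 9 * b + 13 * (c' + 3) + 16 * e
        = 6 * (a + 2) + 9 * (b + 3) + 13 * c' + 16 * e by ring]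
    by_cases h5 : 2 ≤ e
    · -- x₄² → x₀x₁²
      obtain ⟨e', rfl⟩ : ∃ e', e = e' + 2 := ⟨e - 2, by omega⟩
      have step : (X 0 ^ a * X 1 ^ b * X 2 ^ c * X 3 ^ (e' + 2)
          - X 0 ^ (a + 1) * X 1 ^ b * X 2 ^ (c + 2) * X 3 ^ e' : MvPolynomial (Fin 4) ℚ)
          = (X 0 ^ a * X 1 ^ b * X 2 ^ c * X 3 ^ e') * -(X 0 * X 2 ^ 2 - X 3 ^ 2) := by ring
      have hs : _ ∈ Ideal.span gset :=
        Ideal.mul_mem_left _ (X 0 ^ a * X 1 ^ b * X 2 ^ c * X 3 ^ e')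
          (neg_mem (Ideal.subset_span mem_gset_4))
      rw [← step] at hs
      have this' := add_mem hs (IH (a + 1) b (c + 2) e' (by omega))
      rw [sub_add_sub_cancel] at this'
      rwa [show 6 * a + 9 * b + 13 * c + 16 * (e' + 2)
        = 6 * (a + 1) + 9 * b + 13 * (c + 2) + 16 * e' by ring]
    by_cases h6 : 2 ≤ c ∧ 1 ≤ e
    · -- x₁²x₄ → x₀x₃⁴
      obtain ⟨c', rfl⟩ : ∃ c', c = c' + 2 := ⟨c - 2, by omega⟩
      obtain ⟨e', rfl⟩ : ∃ e', e = e' + 1 := ⟨e - 1, by omega⟩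
      have step : (X 0 ^ a * X 1 ^ b * X 2 ^ (c' + 2) * X 3 ^ (e' + 1)
          - X 0 ^ (a + 1) * X 1 ^ (b + 4) * X 2 ^ c' * X 3 ^ e' : MvPolynomial (Fin 4) ℚ)
          = (X 0 ^ a * X 1 ^ b * X 2 ^ c' * X 3 ^ e') * -(X 0 * X 1 ^ 4 - X 2 ^ 2 * X 3) := by
        ring
      have hs : _ ∈ Ideal.span gset :=
        Ideal.mul_mem_left _ (X 0 ^ a * X 1 ^ b * X 2 ^ c' * X 3 ^ e')
          (neg_mem (Ideal.subset_span mem_gset_6))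
      rw [← step] at hs
      have this' := add_mem hs (IH (a + 1) (b + 4) c' e' (by omega))
      rw [sub_add_sub_cancel] at this'
      rwa [show 6 * a + 9 * b + 13 * (c' + 2) + 16 * (e' + 1)
        = 6 * (a + 1) + 9 * (b + 4) + 13 * c' + 16 * e' by ring]
    -- base cases: normal monomials
    have h7 : (b = 0 ∧ c = 0 ∧ e = 0) ∨ (b = 1 ∧ c = 0 ∧ e = 0) ∨ (b = 0 ∧ c = 1 ∧ e = 0)
        ∨ (b = 0 ∧ c = 2 ∧ e = 0) ∨ (b = 0 ∧ c = 0 ∧ e = 1) ∨ (b = 0 ∧ c = 1 ∧ e = 1) := by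
      omega
    rcases h7 with ⟨rfl, rfl, rfl⟩ | ⟨rfl, rfl, rfl⟩ | ⟨rfl, rfl, rfl⟩ | ⟨rfl, rfl, rfl⟩ |
      ⟨rfl, rfl, rfl⟩ | ⟨rfl, rfl, rfl⟩
    · rw [show 6 * a + 9 * 0 + 13 * 0 + 16 * 0 = 6 * a by ring, Nf0,
        show (X 0 ^ a * X 1 ^ 0 * X 2 ^ 0 * X 3 ^ 0 : MvPolynomial (Fin 4) ℚ) = X 0 ^ a by ring,
        sub_self]
      exact zero_mem _
    · rw [show 6 * a + 9 * 1 + 13 * 0 + 16 * 0 = 6 * a + 9 by ring, Nf3,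
        show (X 0 ^ a * X 1 ^ 1 * X 2 ^ 0 * X 3 ^ 0 : MvPolynomial (Fin 4) ℚ)
          = X 0 ^ a * X 1 by ring, sub_self]
      exact zero_mem _
    · rw [show 6 * a + 9 * 0 + 13 * 1 + 16 * 0 = 6 * a + 13 by ring, Nf1,
        show (X 0 ^ a * X 1 ^ 0 * X 2 ^ 1 * X 3 ^ 0 : MvPolynomial (Fin 4) ℚ)
          = X 0 ^ a * X 2 by ring, sub_self]
      exact zero_mem _
    · rw [show 6 * a + 9 * 0 + 13 * 2 + 16 * 0 = 6 * a + 26 by ring, Nf2,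
        show (X 0 ^ a * X 1 ^ 0 * X 2 ^ 2 * X 3 ^ 0 : MvPolynomial (Fin 4) ℚ)
          = X 0 ^ a * X 2 ^ 2 by ring, sub_self]
      exact zero_mem _
    · rw [show 6 * a + 9 * 0 + 13 * 0 + 16 * 1 = 6 * a + 16 by ring, Nf4,
        show (X 0 ^ a * X 1 ^ 0 * X 2 ^ 0 * X 3 ^ 1 : MvPolynomial (Fin 4) ℚ)
          = X 0 ^ a * X 3 by ring, sub_self]
      exact zero_mem _
    · rw [show 6 * a + 9 * 0 + 13 * 1 + 16 * 1 = 6 * a + 29 by ring, Nf5,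
        show (X 0 ^ a * X 1 ^ 0 * X 2 ^ 1 * X 3 ^ 1 : MvPolynomial (Fin 4) ℚ)
          = X 0 ^ a * X 2 * X 3 by ring, sub_self]
      exact zero_mem _

noncomputable def J : Ideal (MvPolynomial (Fin 4) ℚ) := Ideal.span gset

noncomputable def L (q : Polynomial ℚ) : MvPolynomial (Fin 4) ℚ ⧸ J :=
  q.sum fun d c => Ideal.Quotient.mk J (C c * Nf d)

lemma L_add (q q' : Polynomial ℚ) : L (q + q') = L q + L q' := by
  unfold L
  apply Polynomial.sum_add_index <;> intros <;>
    simp [← map_add, ← add_mul, ← C_add]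

lemma L_monomial (d : ℕ) (r : ℚ) :
    L (Polynomial.monomial d r) = Ideal.Quotient.mk J (C r * Nf d) := by
  unfold L
  rw [Polynomial.sum_monomial_index]
  simp

lemma monomial_decomp (a : Fin 4 →₀ ℕ) (r : ℚ) :
    (monomial a r : MvPolynomial (Fin 4) ℚ)
      = C r * X 0 ^ a 0 * X 1 ^ a 1 * X 2 ^ a 2 * X 3 ^ a 3 := by
  have ha : a = Finsupp.single 0 (a 0) + Finsupp.single 1 (a 1)
      + Finsupp.single 2 (a 2) + Finsupp.single 3 (a 3) := by
    ext i
    fin_cases i <;> simp [Finsupp.single_apply]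
  conv_lhs => rw [ha]
  rw [monomial_add_single, monomial_add_single, monomial_add_single,
    show Finsupp.single (0 : Fin 4) (a 0) = 0 + Finsupp.single 0 (a 0) by simp,
    monomial_add_single, monomial_zero']

noncomputable def phi : MvPolynomial (Fin 4) ℚ →ₐ[ℚ] Polynomial ℚ :=
  MvPolynomial.aeval
    ![Polynomial.X ^ 6, Polynomial.X ^ 9, Polynomial.X ^ 13, Polynomial.X ^ 16]

lemma phi_prod (a0 a1 a2 a3 : ℕ) (r : ℚ) :
    phi (C r * X 0 ^ a0 * X 1 ^ a1 * X 2 ^ a2 * X 3 ^ a3)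
      = Polynomial.monomial (6 * a0 + 9 * a1 + 13 * a2 + 16 * a3) r := by
  unfold phi
  simp only [map_mul, map_pow, aeval_X, aeval_C, algebraMap_eq,
    Matrix.cons_val_zero, Matrix.cons_val_one, Matrix.head_cons,
    Matrix.cons_val_two, Matrix.tail_cons, Matrix.cons_val_three]
  rw [← pow_mul, ← pow_mul, ← pow_mul, ← pow_mul]
  rw [mul_assoc, mul_assoc, mul_assoc, ← pow_add, ← pow_add, ← pow_add]
  rw [show 6 * a0 + (9 * a1 + (13 * a2 + 16 * a3))
    = 6 * a0 + 9 * a1 + 13 * a2 + 16 * a3 by ring]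
  rw [show (algebraMap ℚ (Polynomial ℚ)) r = Polynomial.C r from rfl,
    Polynomial.C_mul_X_pow_eq_monomial]

lemma key (p : MvPolynomial (Fin 4) ℚ) : Ideal.Quotient.mk J p = L (phi p) := by
  induction p using MvPolynomial.induction_on' with
  | add p q hp hq => rw [map_add, map_add, L_add, hp, hq]
  | monomial a r =>
    rw [monomial_decomp, phi_prod, L_monomial]
    have hred := reduce (3 * a 1 + 4 * a 2 + 5 * a 3) (a 0) (a 1) (a 2) (a 3) le_rfl
    apply Ideal.Quotient.eq.mpr
    have heq : C r * X 0 ^ a 0 * X 1 ^ a 1 * X 2 ^ a 2 * X 3 ^ a 3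
        - C r * Nf (6 * a 0 + 9 * a 1 + 13 * a 2 + 16 * a 3)
        = C r * (X 0 ^ a 0 * X 1 ^ a 1 * X 2 ^ a 2 * X 3 ^ a 3
          - Nf (6 * a 0 + 9 * a 1 + 13 * a 2 + 16 * a 3)) := by ring
    rw [heq]
    exact Ideal.mul_mem_left _ _ hred

lemma gset_ker : ∀ p ∈ gset, phi p = 0 := by
  intro p hp
  simp only [gset, Set.mem_insert_iff, Set.mem_singleton_iff] at hp
  rcases hp with rfl | rfl | rfl | rfl | rfl | rfl <;>
    · unfold phi
      simp [Matrix.cons_val_one, Matrix.head_cons]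
      ring

lemma L_zero : L 0 = 0 := by
  unfold L
  exact Polynomial.sum_zero_index _

/-- In `P = ℚ[x₀, x₃, x₁, x₄]` (variables indexed so that `X 0 = x₀`,
`X 1 = x₃`, `X 2 = x₁`, `X 3 = x₄`, of degrees 6, 9, 13, 16), the kernel of
the ring map `P → ℚ[t]`, `x₀ ↦ t⁶, x₃ ↦ t⁹, x₁ ↦ t¹³, x₄ ↦ t¹⁶`, contains
the six elements `x₀³ − x₃²`, `x₃x₁ − x₀x₄`, `x₀²x₁ − x₃x₄`, `x₀x₁² − x₄²`,
`x₀²x₃³ − x₁³`, `x₀x₃⁴ − x₁²x₄`, and these six elements generate it. -/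
theorem stmt_8 :
    let φ : MvPolynomial (Fin 4) ℚ →ₐ[ℚ] Polynomial ℚ :=
      MvPolynomial.aeval
        ![Polynomial.X ^ 6, Polynomial.X ^ 9, Polynomial.X ^ 13, Polynomial.X ^ 16]
    let gens : Set (MvPolynomial (Fin 4) ℚ) :=
      {X 0 ^ 3 - X 1 ^ 2, X 1 * X 2 - X 0 * X 3, X 0 ^ 2 * X 2 - X 1 * X 3,
        X 0 * X 2 ^ 2 - X 3 ^ 2, X 0 ^ 2 * X 1 ^ 3 - X 2 ^ 3,
        X 0 * X 1 ^ 4 - X 2 ^ 2 * X 3}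
    (∀ p ∈ gens, p ∈ RingHom.ker φ.toRingHom) ∧
      Ideal.span gens = RingHom.ker φ.toRingHom := by
  intro φ gens
  have hker : ∀ p ∈ gset, p ∈ RingHom.ker phi.toRingHom := fun p hp => gset_ker p hp
  refine ⟨hker, ?_⟩
  show Ideal.span gset = RingHom.ker phi.toRingHom
  apply le_antisymm
  · rw [Ideal.span_le]
    exact hker
  · intro p hp
    have h0 : phi p = 0 := hp
    have hmk : Ideal.Quotient.mk J p = 0 := by rw [key p, h0, L_zero]
    exact Ideal.Quotient.eq_zero_iff_mem.mp hmk
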